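/- Let c : {1,2,3,…} → ℚ and let M_i denote the unique ℚ-linear operator on ℚ[x₁,x₂,…] with M_i S_π = S_{r_i π} if ℓ(r_i π) < ℓ(π) and M_i S_π = 0 otherwise (defined via the Schubert basis; the sum D = Σ_{i ≥ 1} c_i M_i is well-defined on each polynomial since each π ∈ S_∞ has finitely many left descents). If D is a derivation of the ring ℚ[x₁,x₂,…] (i.e. D(fg) = D(f)g + fD(g) for all f, g), then c_i = i · c₁ for all i ≥ 1; that is, D is a scalar multiple of ∇ = Σ_i ∂/∂x_i. -/

import Mathlib

open MvPolynomial

/-- The simple transposition `r_i = (i, i+1)` of `{1, 2, 3, …}`. -/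
def simpleTransposition (i : ℕ+) : Equiv.Perm ℕ+ := Equiv.swap i (i + 1)

/-- A permutation of `{1, 2, 3, …}` moves only finitely many points. -/
def FinitelySupported (π : Equiv.Perm ℕ+) : Prop := {i : ℕ+ | π i ≠ i}.Finite

/-- The Coxeter length of a finitely supported permutation of `{1, 2, 3, …}`:
the least length of a word in the simple transpositions expressing it. -/
noncomputable def len (π : Equiv.Perm ℕ+) : ℕ :=
  sInf {k : ℕ | ∃ l : List ℕ+, l.length = k ∧ π = (l.map simpleTransposition).prod}

/-- The set of reduced words for `π`. -/
def RW (π : Equiv.Perm ℕ+) : Set (List ℕ+) :=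
  {l : List ℕ+ | l.length = len π ∧ π = (l.map simpleTransposition).prod}

/-- `i ↦ n + 1 - i` on `{1, …, n}`, identity elsewhere. -/
def w0fun (n : ℕ) : ℕ+ → ℕ+ :=
  fun i => if h : (i : ℕ) ≤ n then (⟨n + 1 - (i : ℕ), by omega⟩ : ℕ+) else i

theorem w0fun_involutive (n : ℕ) : Function.Involutive (w0fun n) := by
  intro i
  have hi : 1 ≤ (i : ℕ) := i.2
  apply PNat.coe_injective
  by_cases h1 : (i : ℕ) ≤ n
  · have h2 : n + 1 - (i : ℕ) ≤ n := by omega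
    simp [w0fun, h1, h2] <;> omega
  · simp [w0fun, h1]

/-- The longest element `w₀` of `S_n ⊆ S_∞`, i.e. `i ↦ n + 1 - i` on `{1, …, n}`. -/
def w0 (n : ℕ) : Equiv.Perm ℕ+ := Function.Involutive.toPerm (w0fun n) (w0fun_involutive n)

/-- The property defining Schubert polynomials: `S_{w₀} = x₁^{n-1} x₂^{n-2} ⋯ x_{n-1}`
for the longest element `w₀` of each `S_n`, together with
`∂_i S_π = S_{π rᵢ}` whenever `ℓ(π rᵢ) = ℓ(π) − 1`, the latter encoded
denominator-free as `(xᵢ − xᵢ₊₁) · S_{π rᵢ} = S_π − sᵢ(S_π)`. -/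
def IsSchubertFamily {R : Type*} [CommRing R] (SP : Equiv.Perm ℕ+ → MvPolynomial ℕ+ R) : Prop :=
  (∀ n : ℕ, SP (w0 n)
      = ∏ i ∈ Finset.range n, (X (⟨i + 1, Nat.succ_pos i⟩ : ℕ+) : MvPolynomial ℕ+ R) ^ (n - 1 - i))
  ∧ (∀ π : Equiv.Perm ℕ+, FinitelySupported π → ∀ i : ℕ+,
      len (π * simpleTransposition i) + 1 = len π →
      (X i - X (i + 1)) * SP (π * simpleTransposition i)
        = SP π - rename (Equiv.swap i (i + 1)) (SP π))


/-!
Descending from `S_{w₀} = x₁^{n-1} ⋯ x_{n-1}` along the staircase reduced word of `w₀`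
(all of whose prefixes are reduced, because `w₀` has `n choose 2` inversions and the length of a
permutation is at least its number of inversions), the divided-difference identity
`∂_j h_{k+1}(x_a, …, x_j) = h_k(x_a, …, x_{j+1})` shows that the Schubert polynomial of
`r_{a+m-1} ⋯ r_{a+1} r_a` is the complete homogeneous polynomial `h_m(x₁, …, x_a)`.

Since `r_a` and `r_{a+1} r_a` each have a single left descent, `D(x₁ + ⋯ + x_a) = c_a` and
`D h₂(x₁, …, x_a) = c_{a+1} (x₁ + ⋯ + x_a)`. Computing the coefficient of `x₁` in
`D h₂(x₁, …, x_a)` with the Leibniz rule instead gives `c_a + c₁`, so `c_{a+1} = c_a + c₁`.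
-/

theorem FinitelySupported.mul {σ τ : Equiv.Perm ℕ+} (hσ : FinitelySupported σ)
    (hτ : FinitelySupported τ) : FinitelySupported (σ * τ) :=
  (hσ.union hτ).subset fun p hp => by
    by_contra h
    simp_all

namespace Schubert

open Equiv Finset MvPolynomial

/-- Generators are indexed from `0`: `s k` is `r_{k+1} = (k+1, k+2)`. -/
abbrev s (k : ℕ) : Perm ℕ+ := simpleTransposition k.succPNat

lemma simpleTransposition_eq_s (i : ℕ+) : simpleTransposition i = s i.natPred := by
  simp only [s, PNat.succPNat_natPred]

lemma coe_s_apply (k : ℕ) (p : ℕ+) :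
    (s k p : ℕ) = if (p : ℕ) = k + 1 then k + 2 else if (p : ℕ) = k + 2 then k + 1 else p := by
  have hk : ((k.succPNat + 1 : ℕ+) : ℕ) = k + 2 := by simp
  simp only [simpleTransposition, swap_apply_def, ← PNat.coe_inj, hk, Nat.succPNat_coe]
  split_ifs <;> simp_all

lemma coe_s_apply_le (k : ℕ) (p : ℕ+) : (s k p : ℕ) ≤ p + 1 := by
  rw [coe_s_apply]
  split_ifs <;> omega

lemma s_mul_self (k : ℕ) : s k * s k = 1 := swap_mul_self _ _

lemma s_injective : Function.Injective s := by
  intro j k h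
  have := congrArg (fun σ : Perm ℕ+ => (σ j.succPNat : ℕ)) h
  simp only [coe_s_apply, Nat.succPNat_coe, Nat.succ_eq_add_one] at this
  grind

lemma finitelySupported_one : FinitelySupported 1 := by
  simp [FinitelySupported]

lemma finitelySupported_s (k : ℕ) : FinitelySupported (s k) :=
  (Set.toFinite {k.succPNat, k.succPNat + 1}).subset fun p hp => by
    by_contra h
    simp_all [simpleTransposition, swap_apply_of_ne_of_ne]

def wordProd (l : List ℕ) : Perm ℕ+ := (l.map s).prod

@[simp] lemma wordProd_nil : wordProd [] = 1 := rfl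

@[simp] lemma wordProd_cons (k : ℕ) (l : List ℕ) : wordProd (k :: l) = s k * wordProd l := by
  simp [wordProd]

@[simp] lemma wordProd_append (l₁ l₂ : List ℕ) :
    wordProd (l₁ ++ l₂) = wordProd l₁ * wordProd l₂ := by
  simp [wordProd]

@[simp] lemma wordProd_singleton (k : ℕ) : wordProd [k] = s k := by simp

lemma finitelySupported_wordProd (l : List ℕ) : FinitelySupported (wordProd l) := by
  induction l with
  | nil => exact finitelySupported_one
  | cons k l ih => rw [wordProd_cons]; exact (finitelySupported_s k).mul ih

lemma len_wordProd_le (l : List ℕ) : len (wordProd l) ≤ l.length :=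
  Nat.sInf_le ⟨l.map Nat.succPNat, by simp, by simp [wordProd, Function.comp_def]⟩

lemma len_one : len 1 = 0 := Nat.le_zero.mp (len_wordProd_le [])

lemma exists_reduced_word (l : List ℕ) :
    ∃ m : List ℕ, m.length = len (wordProd l) ∧ wordProd m = wordProd l := by
  obtain ⟨m, hm, he⟩ : len (wordProd l) ∈
      {k | ∃ m : List ℕ+, m.length = k ∧ wordProd l = (m.map simpleTransposition).prod} :=
    Nat.sInf_mem ⟨_, l.map Nat.succPNat, rfl, by simp [wordProd, Function.comp_def]⟩
  refine ⟨m.map PNat.natPred, by simpa using hm, ?_⟩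
  unfold wordProd at he ⊢
  simp only [List.map_map, Function.comp_def, ← simpleTransposition_eq_s, he]

lemma len_wordProd_mul_le (l m : List ℕ) :
    len (wordProd l * wordProd m) ≤ len (wordProd l) + m.length := by
  obtain ⟨l', hl', he⟩ := exists_reduced_word l
  simpa [← he, hl'] using len_wordProd_le (l' ++ m)

lemma len_wordProd_of_isPrefix {l m : List ℕ} (h : l <+: m) (hm : len (wordProd m) = m.length) :
    len (wordProd l) = l.length := by
  obtain ⟨t, rfl⟩ := h
  have := len_wordProd_mul_le l t
  have := len_wordProd_le l
  simp only [wordProd_append, List.length_append] at hm this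
  omega

lemma wordProd_eq_one_of_len_eq_zero {l : List ℕ} (h : len (wordProd l) = 0) :
    wordProd l = 1 := by
  obtain ⟨m, hm, he⟩ := exists_reduced_word l
  rw [← he, List.eq_nil_of_length_eq_zero (hm.trans h), wordProd_nil]

lemma coe_wordProd_apply_le_of_len_le_one {l : List ℕ} (h : len (wordProd l) ≤ 1) (p : ℕ+) :
    (wordProd l p : ℕ) ≤ p + 1 := by
  obtain ⟨m, hm, he⟩ := exists_reduced_word l
  rw [← he]
  match m, hm ▸ h with
  | [], _ => simp
  | [k], _ => simpa using coe_s_apply_le k p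

def inversions (π : Perm ℕ+) : Set (ℕ+ × ℕ+) := {p | p.1 < p.2 ∧ π p.2 < π p.1}

lemma inversions_finite {π : Perm ℕ+} (h : FinitelySupported π) : (inversions π).Finite := by
  obtain ⟨N, hN⟩ := h.bddAbove
  have hfix : ∀ p, N < p → π p = p := fun p hp => by
    by_contra hne
    exact absurd (hN hne) (not_le.mpr hp)
  refine ((Set.finite_Iic N).prod (Set.finite_Iic N)).subset ?_
  rintro ⟨a, b⟩ ⟨hab, hba⟩
  by_contra hout
  simp only [Set.mem_prod, Set.mem_Iic, not_and_or, not_le] at hout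
  have hb : N < b := hout.elim (fun ha => ha.trans hab) id
  rw [hfix b hb] at hba
  by_cases ha : N < a
  · rw [hfix a ha] at hba
    exact lt_asymm hab hba
  · rw [π.injective (hfix _ (hb.trans hba))] at hba
    exact lt_asymm hab hba

lemma s_lt_s {k : ℕ} {a b : ℕ+} (hab : a < b) (hk : (a, b) ≠ (k.succPNat, k.succPNat + 1)) :
    s k a < s k b := by
  have hk' : ¬((a : ℕ) = k + 1 ∧ (b : ℕ) = k + 2) := fun ⟨ha, hb⟩ =>
    hk (Prod.ext (PNat.coe_injective ha) (PNat.coe_injective (by simpa using hb)))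
  rw [← PNat.coe_lt_coe] at hab ⊢
  rw [coe_s_apply, coe_s_apply]
  split_ifs <;> omega

/-- Away from the pair `(k+1, k+2)`, `s k` maps inversions of `π * s k` injectively to
inversions of `π`. -/
lemma ncard_inversions_mul_s_le {π : Perm ℕ+} (hπ : FinitelySupported π) (k : ℕ) :
    (inversions (π * s k)).ncard ≤ (inversions π).ncard + 1 := by
  set q : ℕ+ × ℕ+ := (k.succPNat, k.succPNat + 1)
  have hmaps : ∀ p ∈ inversions (π * s k) \ {q}, (s k p.1, s k p.2) ∈ inversions π :=
    fun p ⟨⟨hp, hπp⟩, hq⟩ => ⟨s_lt_s hp hq, hπp⟩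
  have hinj : Set.InjOn (fun p : ℕ+ × ℕ+ => (s k p.1, s k p.2)) (inversions (π * s k) \ {q}) :=
    fun p _ p' _ h => by
      simp only [Prod.mk.injEq, (s k).injective.eq_iff] at h
      exact Prod.ext h.1 h.2
  have := Set.ncard_le_ncard_of_injOn _ hmaps hinj (inversions_finite hπ)
  have := Set.pred_ncard_le_ncard_sdiff_singleton (inversions (π * s k)) q
  omega

lemma ncard_inversions_wordProd_le (l : List ℕ) :
    (inversions (wordProd l)).ncard ≤ l.length := by
  induction l using List.reverseRecOn with
  | nil =>
    have : inversions 1 = ∅ := Set.eq_empty_of_forall_notMem fun _ h => lt_asymm h.1 h.2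
    simp [this]
  | append_singleton l k ih =>
    have := ncard_inversions_mul_s_le (finitelySupported_wordProd l) k
    simp only [wordProd_append, wordProd_singleton, List.length_append, List.length_singleton]
    omega

lemma ncard_inversions_le_len (l : List ℕ) :
    (inversions (wordProd l)).ncard ≤ len (wordProd l) := by
  obtain ⟨m, hm, he⟩ := exists_reduced_word l
  simpa [← he, hm] using ncard_inversions_wordProd_le m

lemma coe_w0_apply (n : ℕ) (p : ℕ+) :
    (w0 n p : ℕ) = if (p : ℕ) ≤ n then n + 1 - p else p := by
  change (w0fun n p : ℕ) = _
  unfold w0fun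
  split_ifs with h <;> simp [h]

lemma inversions_w0 (n : ℕ) :
    inversions (w0 n) = ↑{p ∈ (range n).image Nat.succPNat ×ˢ (range n).image Nat.succPNat |
      p.1 < p.2} := by
  have hmem (p : ℕ+) : (∃ x < n, x.succPNat = p) ↔ (p : ℕ) ≤ n :=
    ⟨fun ⟨x, hx, hp⟩ => by simpa [← hp],
      fun h => ⟨p.natPred, by have := p.pos; simp [PNat.natPred]; omega, p.succPNat_natPred⟩⟩
  ext ⟨a, b⟩
  have := a.pos
  simp only [inversions, Set.mem_ofPred_eq, coe_filter, mem_product, mem_image, mem_range, hmem,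
    ← PNat.coe_lt_coe, coe_w0_apply]
  split_ifs <;> omega

lemma ncard_inversions_w0 (n : ℕ) : (inversions (w0 n)).ncard = n.choose 2 := by
  rw [inversions_w0, Set.ncard_coe_finset, card_product_filter_lt,
    card_image_of_injective _ Nat.succPNat_injective, card_range]

def decWord (a m : ℕ) : List ℕ := (List.range' a m).reverse

@[simp] lemma length_decWord (a m : ℕ) : (decWord a m).length = m := by simp [decWord]

lemma decWord_succ (a m : ℕ) : decWord a (m + 1) = decWord (a + 1) m ++ [a] := by
  simp [decWord, List.range'_succ]

lemma decWord_isPrefix {a m i : ℕ} (hi : i ≤ m) : decWord (a + i) (m - i) <+: decWord a m := by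
  refine ⟨decWord a i, ?_⟩
  rw [decWord, decWord, decWord, ← List.reverse_append, List.range'_append_1,
    Nat.add_sub_cancel' hi]

lemma coe_wordProd_decWord_apply (a m : ℕ) (p : ℕ+) :
    (wordProd (decWord a m) p : ℕ) =
      if (p : ℕ) = a + 1 then a + m + 1 else if a + 1 < p ∧ (p : ℕ) ≤ a + m + 1 then p - 1
      else p := by
  induction m generalizing a p with
  | zero =>
    simp only [decWord, List.range'_zero, List.reverse_nil, wordProd_nil, Perm.one_apply]
    split_ifs <;> omega
  | succ m ih =>
    rw [decWord_succ, wordProd_append, Perm.mul_apply, ih, wordProd_singleton, coe_s_apply]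
    split_ifs <;> omega

/-- For `r = n + 1`, a reduced word of `w0 (n + 1)` (see `len_wordProd_stairWord`). -/
def stairWord (n r : ℕ) : List ℕ := (List.range r).flatMap fun t => decWord t (n - t)

lemma stairWord_succ (n r : ℕ) : stairWord n (r + 1) = stairWord n r ++ decWord r (n - r) := by
  simp [stairWord, List.range_succ]

lemma stairWord_isPrefix (n : ℕ) {r r' : ℕ} (h : r ≤ r') : stairWord n r <+: stairWord n r' := by
  induction r', h using Nat.le_induction with
  | base => exact List.prefix_refl _
  | succ r' _ ih => exact ih.trans (stairWord_succ n r' ▸ List.prefix_append _ _)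

lemma length_stairWord (n r : ℕ) : (stairWord n r).length = ∑ t ∈ range r, (n - t) := by
  induction r with
  | zero => simp [stairWord]
  | succ r ih => rw [stairWord_succ, List.length_append, ih, length_decWord, sum_range_succ]

lemma coe_wordProd_stairWord_apply {n r : ℕ} (hr : r ≤ n + 1) (p : ℕ+) :
    (wordProd (stairWord n r) p : ℕ) =
      if (p : ℕ) ≤ r then n + 2 - p else if (p : ℕ) ≤ n + 1 then p - r else p := by
  induction r generalizing p with
  | zero => simp [stairWord]
  | succ r ih =>
    rw [stairWord_succ, wordProd_append, Perm.mul_apply, ih (by omega),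
      coe_wordProd_decWord_apply]
    have := p.pos
    split_ifs <;> omega

lemma wordProd_stairWord (n : ℕ) : wordProd (stairWord n (n + 1)) = w0 (n + 1) := by
  ext p
  rw [← PNat.coe_inj, coe_wordProd_stairWord_apply le_rfl, coe_w0_apply]
  split_ifs <;> omega

lemma len_wordProd_stairWord (n : ℕ) :
    len (wordProd (stairWord n (n + 1))) = (stairWord n (n + 1)).length := by
  refine le_antisymm (len_wordProd_le _) ?_
  have hsum : ∑ t ∈ range (n + 1), (n - t) = (n + 1).choose 2 := by
    have := sum_range_reflect (fun t => t) (n + 1)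
    simp only [Nat.add_sub_cancel] at this
    rw [this, sum_range_id, Nat.choose_two_right]
  calc (stairWord n (n + 1)).length = (inversions (w0 (n + 1))).ncard := by
        rw [length_stairWord, hsum, ncard_inversions_w0]
    _ ≤ _ := wordProd_stairWord n ▸ ncard_inversions_le_len _

/-- The prefixes of `stairWord n (n + 1)` along which Schubert polynomials are computed. -/
def chainWord (n r i : ℕ) : List ℕ := stairWord n r ++ decWord (r + i) (n - r - i)

lemma chainWord_zero (n r : ℕ) : chainWord n r 0 = stairWord n (r + 1) := by
  rw [chainWord, stairWord_succ, add_zero, Nat.sub_zero]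

lemma chainWord_eq_append {n r i : ℕ} (hi : i < n - r) :
    chainWord n r i = chainWord n r (i + 1) ++ [r + i] := by
  obtain ⟨m, hm⟩ : ∃ m, n - r - i = m + 1 := ⟨n - r - i - 1, by omega⟩
  rw [chainWord, chainWord, hm, decWord_succ, ← add_assoc, List.append_assoc]
  congr 3
  omega

lemma len_wordProd_chainWord {n r i : ℕ} (hr : r ≤ n) :
    len (wordProd (chainWord n r i)) = (chainWord n r i).length := by
  refine len_wordProd_of_isPrefix ?_ (len_wordProd_stairWord n)
  refine List.IsPrefix.trans ?_ (stairWord_isPrefix n (Nat.succ_le_succ hr))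
  rw [chainWord, stairWord_succ, List.prefix_append_right_inj]
  by_cases hi : i ≤ n - r
  · exact decWord_isPrefix hi
  · rw [show n - r - i = 0 by omega]
    exact List.nil_prefix

lemma len_wordProd_decWord (i m : ℕ) : len (wordProd (decWord i m)) = m := by
  have := len_wordProd_chainWord (n := i + m) (r := 0) (i := i) (Nat.zero_le _)
  rwa [chainWord, stairWord, List.range_zero, List.flatMap_nil, List.nil_append, zero_add,
    Nat.sub_zero, Nat.add_sub_cancel_left, length_decWord] at this

lemma len_s (k : ℕ) : len (s k) = 1 := by
  simpa [decWord] using len_wordProd_decWord k 1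

lemma len_s_mul_s (k : ℕ) : len (s (k + 1) * s k) = 2 := by
  simpa [decWord, List.range'_succ] using len_wordProd_decWord k 2

variable {R : Type*} [CommRing R]

variable (R) in
/-- `completeHom R a m k = h_k(x_{a+1}, …, x_{a+m})`. -/
noncomputable def completeHom (a : ℕ) : ℕ → ℕ → MvPolynomial ℕ+ R
  | _, 0 => 1
  | 0, _ + 1 => 0
  | m + 1, k + 1 => completeHom a m (k + 1) + X (a + m).succPNat * completeHom a (m + 1) k

@[simp] lemma completeHom_zero_right (a m : ℕ) : completeHom R a m 0 = 1 := by
  cases m <;> simp [completeHom]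

lemma completeHom_succ_succ (a m k : ℕ) : completeHom R a (m + 1) (k + 1) =
    completeHom R a m (k + 1) + X (a + m).succPNat * completeHom R a (m + 1) k := by
  rw [completeHom]

lemma completeHom_one_left (a k : ℕ) : completeHom R a 1 k = X a.succPNat ^ k := by
  induction k with
  | zero => simp
  | succ k ih => simp [completeHom_succ_succ, ih, completeHom, pow_succ, mul_comm]

lemma completeHom_zero_succ_one (k : ℕ) :
    completeHom R 0 (k + 2) 1 = completeHom R 0 (k + 1) 1 + X (k + 1).succPNat := by
  simp only [completeHom_succ_succ, zero_add, completeHom_zero_right, mul_one]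

lemma rename_completeHom {σ : ℕ+ → ℕ+} {a m : ℕ}
    (hσ : ∀ j < m, σ (a + j).succPNat = (a + j).succPNat) (k : ℕ) :
    rename σ (completeHom R a m k) = completeHom R a m k := by
  induction m generalizing k with
  | zero => cases k <;> simp [completeHom]
  | succ m ihm =>
    induction k with
    | zero => simp
    | succ k ihk =>
      rw [completeHom_succ_succ, map_add, map_mul, rename_X, ihk,
        ihm (fun j hj => hσ j (by omega)), hσ m (by omega)]

lemma completeHom_sub_rename_swap (a m k : ℕ) :
    completeHom R a (m + 1) (k + 1) - rename (swap (a + m).succPNat (a + m + 1).succPNat)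
      (completeHom R a (m + 1) (k + 1)) =
      (X (a + m).succPNat - X (a + m + 1).succPNat) * completeHom R a (m + 2) k := by
  have hfix : ∀ j < m, swap (a + m).succPNat (a + m + 1).succPNat (a + j).succPNat =
      (a + j).succPNat := fun j hj =>
    swap_apply_of_ne_of_ne (by simp; omega) (by simp; omega)
  induction k with
  | zero =>
    rw [completeHom_succ_succ, map_add, map_mul, rename_X, rename_completeHom hfix,
      swap_apply_left]
    simp
  | succ k ih =>
    rw [completeHom_succ_succ a m (k + 1), map_add, map_mul, rename_X, rename_completeHom hfix,
      swap_apply_left]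
    rw [show m + 2 = m + 1 + 1 from rfl] at ih ⊢
    rw [completeHom_succ_succ a (m + 1) k, ← add_assoc]
    linear_combination (X (a + m + 1).succPNat : MvPolynomial ℕ+ R) * ih

variable (R) in
noncomputable def stairMono (n r : ℕ) : MvPolynomial ℕ+ R :=
  ∏ t ∈ range r, X t.succPNat ^ (n - t)

lemma rename_stairMono {σ : ℕ+ → ℕ+} {n r : ℕ} (hσ : ∀ t < r, σ t.succPNat = t.succPNat) :
    rename σ (stairMono R n r) = stairMono R n r := by
  simp only [stairMono, map_prod, map_pow, rename_X]
  exact prod_congr rfl fun t ht => by rw [hσ t (mem_range.mp ht)]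

end Schubert

namespace IsSchubertFamily

open Equiv Finset MvPolynomial Schubert

variable {R : Type*} [CommRing R] {SP : Perm ℕ+ → MvPolynomial ℕ+ R}

lemma apply_w0 (hSP : IsSchubertFamily SP) (n : ℕ) :
    SP (wordProd (stairWord n (n + 1))) = stairMono R n (n + 1) := by
  rw [wordProd_stairWord, hSP.1, stairMono]
  exact prod_congr rfl fun t _ => by rw [Nat.add_sub_cancel]; rfl

lemma X_sub_X_mul_apply_of_reduced (hSP : IsSchubertFamily SP) {l : List ℕ} {k : ℕ}
    (hl : len (wordProd (l ++ [k])) = (l ++ [k]).length) :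
    (X k.succPNat - X (k + 1).succPNat) * SP (wordProd l) =
      SP (wordProd (l ++ [k])) -
        rename (swap k.succPNat (k + 1).succPNat) (SP (wordProd (l ++ [k]))) := by
  have hmul : wordProd (l ++ [k]) * s k = wordProd l := by simp [mul_assoc, s_mul_self]
  have hlen : len (wordProd (l ++ [k]) * s k) + 1 = len (wordProd (l ++ [k])) := by
    rw [hmul, len_wordProd_of_isPrefix (List.prefix_append l [k]) hl, hl, List.length_append,
      List.length_singleton]
  rw [← hmul]
  exact hSP.2 _ (finitelySupported_wordProd _) k.succPNat hlen

variable [IsDomain R]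

lemma apply_chainWord (hSP : IsSchubertFamily SP) {n r : ℕ} (hr : r ≤ n)
    (hstair : SP (wordProd (stairWord n (r + 1))) = stairMono R n (r + 1)) {i : ℕ}
    (hi : i ≤ n - r) :
    SP (wordProd (chainWord n r i)) = stairMono R n r * completeHom R r (i + 1) (n - r - i) := by
  induction i with
  | zero =>
    rw [chainWord_zero, hstair, stairMono, prod_range_succ, completeHom_one_left]
    rfl
  | succ i ih =>
    obtain ⟨k, hk⟩ : ∃ k, n - r - i = k + 1 := ⟨n - r - i - 1, by omega⟩
    have key := hSP.X_sub_X_mul_apply_of_reduced (l := chainWord n r (i + 1)) (k := r + i)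
      (by rw [← chainWord_eq_append (by omega)]; exact len_wordProd_chainWord hr)
    rw [← chainWord_eq_append (by omega), ih (by omega), map_mul,
      rename_stairMono (fun t ht => swap_apply_of_ne_of_ne (by simp; omega) (by simp; omega)),
      ← mul_sub, hk, completeHom_sub_rename_swap, mul_left_comm] at key
    rw [show n - r - (i + 1) = k by omega]
    exact mul_left_cancel₀ (sub_ne_zero.mpr ((X_injective (R := R)).ne (by simp))) key

lemma apply_stairWord (hSP : IsSchubertFamily SP) {n r : ℕ} (hr : r ≤ n + 1) :
    SP (wordProd (stairWord n r)) = stairMono R n r := by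
  induction hr using Nat.decreasingInduction with
  | self => exact hSP.apply_w0 n
  | of_succ r hr ih =>
    have := hSP.apply_chainWord (Nat.lt_succ_iff.mp hr) ih (i := n - r) le_rfl
    rwa [chainWord, Nat.sub_self, completeHom_zero_right, mul_one, decWord, List.range'_zero,
      List.reverse_nil, List.append_nil] at this

lemma apply_decWord (hSP : IsSchubertFamily SP) (i m : ℕ) :
    SP (wordProd (decWord i m)) = completeHom R 0 (i + 1) m := by
  have := hSP.apply_chainWord (n := i + m) (r := 0) (i := i) (Nat.zero_le _)
    (hSP.apply_stairWord (by omega)) (by omega)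
  rwa [chainWord, stairWord, List.range_zero, List.flatMap_nil, List.nil_append, stairMono,
    prod_range_zero, one_mul, zero_add, Nat.sub_zero, Nat.add_sub_cancel_left] at this

end IsSchubertFamily

namespace Schubert

open Equiv MvPolynomial

variable {R : Type*} [CommRing R]

/-- `D = ∑ᵢ cᵢ Mᵢ` on the Schubert basis `SP`. -/
def IsMartialSum (SP : Perm ℕ+ → MvPolynomial ℕ+ R) (c : ℕ+ → R)
    (D : MvPolynomial ℕ+ R →ₗ[R] MvPolynomial ℕ+ R) : Prop :=
  ∀ π : Perm ℕ+, FinitelySupported π →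
    D (SP π) = ∑ᶠ i : ℕ+,
      if len (simpleTransposition i * π) < len π then c i • SP (simpleTransposition i * π) else 0

lemma succPNat_zero : (0 : ℕ).succPNat = 1 := rfl

lemma succPNat_succ_ne_one (k : ℕ) : (k + 1).succPNat ≠ 1 := by
  simp [← PNat.coe_inj]

lemma coeff_X_one_X (i : ℕ+) :
    coeff (Finsupp.single 1 1) (X i : MvPolynomial ℕ+ R) = if i = 1 then 1 else 0 := by
  simp [coeff_X, Finsupp.single_eq_single_iff]

lemma coeff_X_one_completeHom_one (k : ℕ) :
    coeff (Finsupp.single 1 1) (completeHom R 0 (k + 1) 1) = 1 := by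
  induction k with
  | zero => rw [completeHom_one_left, pow_one, succPNat_zero, coeff_X_one_X, if_pos rfl]
  | succ k ih =>
    rw [completeHom_zero_succ_one, coeff_add, ih, coeff_X_one_X, if_neg (succPNat_succ_ne_one k),
      add_zero]

namespace IsMartialSum

variable {SP : Perm ℕ+ → MvPolynomial ℕ+ R} {c : ℕ+ → R}
  {D : MvPolynomial ℕ+ R →ₗ[R] MvPolynomial ℕ+ R}

lemma apply_of_unique_descent (hD : IsMartialSum SP c D) {l : List ℕ} {k : ℕ}
    (hk : len (s k * wordProd l) < len (wordProd l))
    (hother : ∀ j ≠ k, len (wordProd l) ≤ len (s j * wordProd l)) :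
    D (SP (wordProd l)) = c k.succPNat • SP (s k * wordProd l) := by
  rw [hD _ (finitelySupported_wordProd l), finsum_eq_single _ k.succPNat, if_pos hk]
  intro i hi
  rw [simpleTransposition_eq_s, if_neg (not_lt.mpr (hother _ fun h => hi ?_))]
  rw [← h, PNat.succPNat_natPred]

variable [IsDomain R]

lemma apply_completeHom_one (hD : IsMartialSum SP c D) (hSP : IsSchubertFamily SP) (k : ℕ) :
    D (completeHom R 0 (k + 1) 1) = C (c k.succPNat) := by
  have hone : SP 1 = 1 := by simpa [decWord] using hSP.apply_decWord 0 0
  have hsp := hSP.apply_decWord k 1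
  simp only [decWord, List.range'_one, List.reverse_singleton, wordProd_singleton] at hsp
  rw [← hsp, ← wordProd_singleton, hD.apply_of_unique_descent (k := k)] <;>
    simp only [wordProd_singleton]
  · rw [s_mul_self, hone, smul_eq_C_mul, mul_one]
  · rw [s_mul_self, len_one, len_s]
    exact one_pos
  · intro j hj
    rw [len_s, Nat.one_le_iff_ne_zero]
    intro h0
    have := wordProd_eq_one_of_len_eq_zero (l := [j, k]) (by simpa using h0)
    simp only [wordProd_cons, wordProd_nil, mul_one] at this
    exact hj (s_injective (mul_right_cancel (this.trans (s_mul_self k).symm)))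

lemma apply_completeHom_two (hD : IsMartialSum SP c D) (hSP : IsSchubertFamily SP) (k : ℕ) :
    D (completeHom R 0 (k + 1) 2) = C (c (k + 1).succPNat) * completeHom R 0 (k + 1) 1 := by
  have hsp := hSP.apply_decWord k 2
  have hs := hSP.apply_decWord k 1
  simp only [decWord, List.range'_succ, List.range'_zero, List.reverse_cons, List.reverse_nil,
    List.nil_append, List.cons_append, wordProd_cons, wordProd_nil, mul_one] at hsp hs
  have hword : s (k + 1) * s k = wordProd [k + 1, k] := by simp
  rw [← hsp, hword, hD.apply_of_unique_descent (k := k + 1)] <;> rw [← hword]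
  · rw [← mul_assoc, s_mul_self, one_mul, hs, smul_eq_C_mul]
  · rw [← mul_assoc, s_mul_self, one_mul, len_s, len_s_mul_s]
    exact one_lt_two
  · intro j hj
    rw [len_s_mul_s]
    by_contra! h
    -- a word of length at most one moves no point by more than one, but `s j * s (k + 1) * s k`
    -- moves `k + 1` to `k + 3` or further
    have := coe_wordProd_apply_le_of_len_le_one (l := [j, k + 1, k])
      (by simpa [mul_assoc] using Nat.lt_succ_iff.mp h) k.succPNat
    simp only [wordProd_cons, wordProd_nil, mul_one, Perm.mul_apply, coe_s_apply,
      Nat.succPNat_coe] at this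
    split_ifs at this <;> omega

lemma apply_X_succ (hD : IsMartialSum SP c D) (hSP : IsSchubertFamily SP) (k : ℕ) :
    D (X (k + 1).succPNat) = C (c (k + 1).succPNat) - C (c k.succPNat) := by
  rw [← hD.apply_completeHom_one hSP, ← hD.apply_completeHom_one hSP, ← map_sub,
    completeHom_zero_succ_one, add_sub_cancel_left]

lemma coeff_X_one_apply_completeHom_two (hD : IsMartialSum SP c D) (hSP : IsSchubertFamily SP)
    (hLeibniz : ∀ f g, D (f * g) = D f * g + f * D g) (k : ℕ) :
    coeff (Finsupp.single 1 1) (D (completeHom R 0 (k + 1) 2)) = c k.succPNat + c 1 := by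
  induction k with
  | zero =>
    have hX := hD.apply_completeHom_one hSP 0
    rw [completeHom_one_left, pow_one, succPNat_zero] at hX
    rw [completeHom_one_left, succPNat_zero, pow_two, hLeibniz, hX, coeff_add, coeff_C_mul,
      mul_comm (X _), coeff_C_mul, coeff_X_one_X, if_pos rfl]
    ring
  | succ k ih =>
    rw [completeHom_succ_succ, zero_add, map_add, hLeibniz, hD.apply_X_succ hSP,
      hD.apply_completeHom_one hSP, coeff_add, coeff_add, ih, sub_mul, coeff_sub, coeff_C_mul,
      coeff_C_mul, coeff_X_one_completeHom_one, mul_comm (X _), coeff_C_mul, coeff_X_one_X,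
      if_neg (succPNat_succ_ne_one k)]
    ring

theorem weight_succPNat (hD : IsMartialSum SP c D) (hSP : IsSchubertFamily SP)
    (hLeibniz : ∀ f g, D (f * g) = D f * g + f * D g) (k : ℕ) :
    c k.succPNat = (k + 1) * c 1 := by
  induction k with
  | zero => rw [succPNat_zero, Nat.cast_zero, zero_add, one_mul]
  | succ k ih =>
    have h := hD.coeff_X_one_apply_completeHom_two hSP hLeibniz k
    rw [hD.apply_completeHom_two hSP, coeff_C_mul, coeff_X_one_completeHom_one, mul_one] at h
    rw [h, ih]
    push_cast
    ring

end IsMartialSum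

end Schubert

/-- Let `D = Σ_i cᵢ Mᵢ` where `Mᵢ` is the operator on `ℚ[x₁, x₂, …]` with
`Mᵢ S_π = S_{rᵢ π}` if `ℓ(rᵢ π) < ℓ(π)` and `Mᵢ S_π = 0` otherwise (defined via the
Schubert basis).  If `D` is a derivation of `ℚ[x₁, x₂, …]` then `cᵢ = i · c₁` for all
`i ≥ 1`, i.e. `D` is a scalar multiple of `∇ = Σ_i ∂/∂xᵢ`. -/
theorem derivation_of_martials_is_multiple_of_nabla
    (SP : Equiv.Perm ℕ+ → MvPolynomial ℕ+ ℚ) (hSP : IsSchubertFamily SP)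
    (c : ℕ+ → ℚ) (D : MvPolynomial ℕ+ ℚ →ₗ[ℚ] MvPolynomial ℕ+ ℚ)
    (hD : ∀ π : Equiv.Perm ℕ+, FinitelySupported π →
      D (SP π) = ∑ᶠ i : ℕ+,
        if len (simpleTransposition i * π) < len π
        then c i • SP (simpleTransposition i * π) else 0)
    (hLeibniz : ∀ f g : MvPolynomial ℕ+ ℚ, D (f * g) = D f * g + f * D g) :
    ∀ i : ℕ+, c i = ((i : ℕ) : ℚ) * c 1 := by
  intro i
  have hD' : Schubert.IsMartialSum SP c D := hD
  rw [← PNat.succPNat_natPred i, hD'.weight_succPNat hSP hLeibniz, Nat.succPNat_coe]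
  push_cast
  ring
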